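/- Let X be distributed as MCMPB_n(α,β,θ) with β ≥ 0, α real, θ > 0 and n a positive integer, and let P denote its probability mass function. Let X^(α) denote the α-power biased variable with probability mass function P^(α)(x) = x^α P(x)/E[X^α] (with 0^α := 0). Then for every nondecreasing function f : ℕ → ℝ, E[f(X^(α))] ≤ E[f(X+1)]; that is, Σ_{x=0}^n f(x) x^α P(x) / Σ_{x=0}^n x^α P(x) ≤ Σ_{x=0}^n f(x+1) P(x), so X^(α) is stochastically smaller than X + 1. -/
import Mathlib

/-- Normalizing constant of the MCMPB distribution:
`C_n(α,β,θ) = ∑_{k=0}^n θ^k / ((k!)^α ((n-k)!)^β)`. -/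
noncomputable def Cn (n : ℕ) (α β θ : ℝ) : ℝ :=
  ∑ k ∈ Finset.range (n + 1), θ ^ k / ((k.factorial : ℝ) ^ α * ((n - k).factorial : ℝ) ^ β)

/-- Probability mass function of `MCMPB_n(α,β,θ)` at `x`. -/
noncomputable def mcmpb (n : ℕ) (α β θ : ℝ) (x : ℕ) : ℝ :=
  θ ^ x / ((x.factorial : ℝ) ^ α * ((n - x).factorial : ℝ) ^ β * Cn n α β θ)

/-- Weighted Chebyshev sum inequality for a monotone/antitone pair. -/
lemma cheb_weighted (s : Finset ℕ) (p g F : ℕ → ℝ) (hp : ∀ i ∈ s, 0 ≤ p i)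
    (hF : Monotone F) (hg : Antitone g) :
    (∑ i ∈ s, F i * (g i * p i)) * (∑ i ∈ s, p i) ≤
      (∑ i ∈ s, F i * p i) * (∑ i ∈ s, g i * p i) := by
  have key : 0 ≤ ∑ i ∈ s, ∑ j ∈ s, p i * p j * ((F j - F i) * (g i - g j)) := by
    refine Finset.sum_nonneg fun i hi => Finset.sum_nonneg fun j hj => ?_
    have hpi := hp i hi
    have hpj := hp j hj
    rcases le_total i j with h | h
    · exact mul_nonneg (mul_nonneg hpi hpj)
        (mul_nonneg (sub_nonneg.2 (hF h)) (sub_nonneg.2 (hg h)))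
    · exact mul_nonneg (mul_nonneg hpi hpj)
        (mul_nonneg_of_nonpos_of_nonpos (sub_nonpos.2 (hF h)) (sub_nonpos.2 (hg h)))
  have expand : ∑ i ∈ s, ∑ j ∈ s, p i * p j * ((F j - F i) * (g i - g j))
      = ∑ i ∈ s, ∑ j ∈ s, ((g i * p i) * (F j * p j) + (F i * p i) * (g j * p j)
          - p i * (F j * (g j * p j)) - (F i * (g i * p i)) * p j) := by
    refine Finset.sum_congr rfl fun i _ => Finset.sum_congr rfl fun j _ => ?_
    ring
  rw [expand] at key
  simp only [sub_eq_add_neg, Finset.sum_add_distrib, Finset.sum_neg_distrib,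
    ← Finset.mul_sum, ← Finset.sum_mul] at key
  nlinarith [key]

lemma Cn_pos (n : ℕ) (α β θ : ℝ) (hθ : 0 < θ) : 0 < Cn n α β θ := by
  refine Finset.sum_pos (fun k _ => ?_) ⟨0, Finset.mem_range.2 (Nat.succ_pos n)⟩
  have h1 : (0:ℝ) < (k.factorial : ℝ) := by exact_mod_cast k.factorial_pos
  have h2 : (0:ℝ) < ((n - k).factorial : ℝ) := by exact_mod_cast (n - k).factorial_pos
  exact div_pos (pow_pos hθ _) (mul_pos (Real.rpow_pos_of_pos h1 _) (Real.rpow_pos_of_pos h2 _))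

lemma mcmpb_pos (n : ℕ) (α β θ : ℝ) (hθ : 0 < θ) (x : ℕ) : 0 < mcmpb n α β θ x := by
  unfold mcmpb
  have h1 : (0:ℝ) < (x.factorial : ℝ) := by exact_mod_cast x.factorial_pos
  have h2 : (0:ℝ) < ((n - x).factorial : ℝ) := by exact_mod_cast (n - x).factorial_pos
  exact div_pos (pow_pos hθ _)
    (mul_pos (mul_pos (Real.rpow_pos_of_pos h1 _) (Real.rpow_pos_of_pos h2 _)) (Cn_pos n α β θ hθ))

lemma mcmpb_sum_one (n : ℕ) (α β θ : ℝ) (hθ : 0 < θ) :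
    ∑ x ∈ Finset.range (n + 1), mcmpb n α β θ x = 1 := by
  have hC := Cn_pos n α β θ hθ
  have : ∑ x ∈ Finset.range (n + 1), mcmpb n α β θ x
      = (∑ x ∈ Finset.range (n + 1),
          θ ^ x / ((x.factorial : ℝ) ^ α * ((n - x).factorial : ℝ) ^ β)) / Cn n α β θ := by
    rw [Finset.sum_div]
    exact Finset.sum_congr rfl fun x _ => by rw [mcmpb, div_div]
  rw [this, ← Cn, div_self hC.ne']

/-- Key shift identity for the power-biased weights. -/
lemma mcmpb_shift (n : ℕ) (α β θ : ℝ) (hθ : 0 < θ) (y : ℕ) (hy : y < n) :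
    ((y + 1 : ℕ) : ℝ) ^ α * mcmpb n α β θ (y + 1)
      = θ * (((n - y : ℕ) : ℝ)) ^ β * mcmpb n α β θ y := by
  obtain ⟨m, hm⟩ : ∃ m, n - y = m + 1 := ⟨n - y - 1, by omega⟩
  have hns : n - (y + 1) = m := by omega
  have hC := (Cn_pos n α β θ hθ).ne'
  have hyf : (0:ℝ) < (y.factorial : ℝ) := by exact_mod_cast y.factorial_pos
  have hmf : (0:ℝ) < (m.factorial : ℝ) := by exact_mod_cast m.factorial_pos
  have hy1 : (0:ℝ) < ((y + 1 : ℕ) : ℝ) := by positivity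
  have hm1 : (0:ℝ) < ((m + 1 : ℕ) : ℝ) := by positivity
  have hfac1 : (((y + 1).factorial : ℕ) : ℝ) ^ α
      = ((y + 1 : ℕ) : ℝ) ^ α * (y.factorial : ℝ) ^ α := by
    rw [Nat.factorial_succ, Nat.cast_mul, Real.mul_rpow hy1.le hyf.le]
  have hfac2 : (((n - y).factorial : ℕ) : ℝ) ^ β
      = ((m + 1 : ℕ) : ℝ) ^ β * (m.factorial : ℝ) ^ β := by
    rw [hm, Nat.factorial_succ, Nat.cast_mul, Real.mul_rpow hm1.le hmf.le]
  have hcast : (((n - y : ℕ)) : ℝ) = ((m + 1 : ℕ) : ℝ) := by rw [hm]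
  rw [mcmpb, mcmpb, hns, hfac1, hfac2, hcast]
  have hy1a : (0:ℝ) < ((y + 1 : ℕ) : ℝ) ^ α := Real.rpow_pos_of_pos hy1 _
  have hm1b : (0:ℝ) < ((m + 1 : ℕ) : ℝ) ^ β := Real.rpow_pos_of_pos hm1 _
  have hyfa : (0:ℝ) < (y.factorial : ℝ) ^ α := Real.rpow_pos_of_pos hyf _
  have hmfb : (0:ℝ) < (m.factorial : ℝ) ^ β := Real.rpow_pos_of_pos hmf _
  field_simp
  ring

/-- Theorem 3: if `X ∼ MCMPB_n(α,β,θ)` with `β ≥ 0`, then the `α`-power biased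
variable `X^(α)` is stochastically smaller than `X + 1`: for every nondecreasing `f`,
`E[f(X^(α))] ≤ E[f(X+1)]` (with the convention `0^α = 0`). -/
theorem mcmpb_power_bias_le (n : ℕ) (hn : 0 < n) (α β θ : ℝ) (hβ : 0 ≤ β) (hθ : 0 < θ)
    (f : ℕ → ℝ) (hf : Monotone f) :
    (∑ x ∈ Finset.range (n + 1),
        f x * ((if x = 0 then 0 else (x : ℝ) ^ α) * mcmpb n α β θ x)) /
      (∑ x ∈ Finset.range (n + 1), (if x = 0 then 0 else (x : ℝ) ^ α) * mcmpb n α β θ x) ≤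
    ∑ x ∈ Finset.range (n + 1), f (x + 1) * mcmpb n α β θ x := by
  set p : ℕ → ℝ := mcmpb n α β θ with hp_def
  set g : ℕ → ℝ := fun y => if y < n then θ * (((n - y : ℕ)) : ℝ) ^ β else 0 with hg_def
  have hp_pos : ∀ x, 0 < p x := mcmpb_pos n α β θ hθ
  have hg_nonneg : ∀ y, 0 ≤ g y := by
    intro y
    simp only [hg_def]
    split
    · have : (0:ℝ) < (((n - y : ℕ)) : ℝ) := by
        have : 0 < n - y := by omega
        exact_mod_cast this
      positivity
    · exact le_rfl
  have hg_anti : Antitone g := by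
    intro a b hab
    simp only [hg_def]
    by_cases hb : b < n
    · have ha : a < n := lt_of_le_of_lt hab hb
      simp only [ha, hb, if_true]
      have h1 : (0:ℝ) < (((n - b : ℕ)) : ℝ) := by
        have : 0 < n - b := by omega
        exact_mod_cast this
      have h2 : (((n - b : ℕ)) : ℝ) ≤ (((n - a : ℕ)) : ℝ) := by
        have : n - b ≤ n - a := by omega
        exact_mod_cast this
      exact mul_le_mul_of_nonneg_left (Real.rpow_le_rpow h1.le h2 hβ) hθ.le
    · simp only [hb, if_false]
      split
      · have : (0:ℝ) < (((n - a : ℕ)) : ℝ) := by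
          have : 0 < n - a := by omega
          exact_mod_cast this
        positivity
      · exact le_rfl
  -- reindexing lemma
  have reindex : ∀ h : ℕ → ℝ,
      ∑ x ∈ Finset.range (n + 1), h x * ((if x = 0 then 0 else (x : ℝ) ^ α) * p x)
        = ∑ y ∈ Finset.range (n + 1), h (y + 1) * (g y * p y) := by
    intro h
    rw [Finset.sum_range_succ' (fun x => h x * ((if x = 0 then 0 else (x : ℝ) ^ α) * p x)) n,
      Finset.sum_range_succ (fun y => h (y + 1) * (g y * p y)) n]
    have hgn : g n = 0 := by simp [hg_def]
    rw [hgn]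
    norm_num
    apply Finset.sum_congr rfl
    intro y hy
    have hy' : y < n := Finset.mem_range.1 hy
    have hgy : g y = θ * (((n - y : ℕ)) : ℝ) ^ β := by simp [hg_def, hy']
    rw [hgy]
    congr 1
    rw [hp_def]
    exact_mod_cast mcmpb_shift n α β θ hθ y hy'
  have hsum_pos : 0 < ∑ y ∈ Finset.range (n + 1), g y * p y := by
    refine Finset.sum_pos' (fun y _ => mul_nonneg (hg_nonneg y) (hp_pos y).le)
      ⟨0, Finset.mem_range.2 (Nat.succ_pos n), ?_⟩
    have hg0 : g 0 = θ * ((n : ℕ) : ℝ) ^ β := by simp [hg_def, hn]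
    rw [hg0]
    have : (0:ℝ) < ((n:ℕ):ℝ) := by exact_mod_cast hn
    have := Real.rpow_pos_of_pos this β
    exact mul_pos (mul_pos hθ this) (hp_pos 0)
  rw [reindex f,
    show (∑ x ∈ Finset.range (n + 1), (if x = 0 then 0 else (x : ℝ) ^ α) * p x)
      = ∑ y ∈ Finset.range (n + 1), g y * p y by
        have := reindex (fun _ => 1)
        simpa using this]
  rw [div_le_iff₀ hsum_pos]
  have hcheb := cheb_weighted (Finset.range (n + 1)) p g (fun y => f (y + 1))
    (fun i _ => (hp_pos i).le) (fun a b hab => hf (by omega)) hg_anti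
  rw [mcmpb_sum_one n α β θ hθ] at hcheb
  simpa using hcheb
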